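/- Let s ∈ (0,1), let Ω ⊆ ℝ^n be an open set and let u : ℝ^n → ℝ be measurable. Then F(u,Ω) = ∫_{−∞}^{∞} P_s({u > t}, Ω) dt, where F(u,Ω) := (1/2) ∫∫_{ℝ^{2n} ∖ (Ω^c × Ω^c)} |u(x)−u(y)| · |x−y|^{−(n+s)} dx dy (both sides valued in [0,∞]). In particular, (1/2)[u]_{W^{s,1}(Ω)} = ∫_{−∞}^{∞} P_s^L({u > t}, Ω) dt, where [u]_{W^{s,1}(Ω)} := ∫_Ω ∫_Ω |u(x)−u(y)| · |x−y|^{−(n+s)} dx dy. -/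

import Mathlib

open MeasureTheory Set Filter Topology Metric Bornology
open scoped ENNReal NNReal symmDiff

noncomputable def Ls (n : ℕ) (s : ℝ) (A B : Set (EuclideanSpace ℝ (Fin n))) : ℝ≥0∞ :=
  ∫⁻ x in A, ∫⁻ y in B, ENNReal.ofReal (dist x y ^ (-((n : ℝ) + s)))

noncomputable def Ps (n : ℕ) (s : ℝ) (E Ω : Set (EuclideanSpace ℝ (Fin n))) : ℝ≥0∞ :=
  Ls n s (E ∩ Ω) (Eᶜ ∩ Ω) + Ls n s (E ∩ Ω) (Eᶜ \ Ω) + Ls n s (E \ Ω) (Eᶜ ∩ Ω)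

def SMinimal (n : ℕ) (s : ℝ) (E Ω : Set (EuclideanSpace ℝ (Fin n))) : Prop :=
  Ps n s E Ω < ⊤ ∧ ∀ F : Set (EuclideanSpace ℝ (Fin n)), MeasurableSet F →
    volume ((F \ Ω) ∆ (E \ Ω)) = 0 → Ps n s E Ω ≤ Ps n s F Ω

/-- The functional `F(u,Ω)`: half of the `Ω`-contribution to the `W^{s,1}`-seminorm of `u`. -/
noncomputable def Fc (n : ℕ) (s : ℝ) (u : EuclideanSpace ℝ (Fin n) → ℝ)
    (Ω : Set (EuclideanSpace ℝ (Fin n))) : ℝ≥0∞ :=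
  2⁻¹ * ∫⁻ p in ((Set.univ \ (Ωᶜ ×ˢ Ωᶜ)) :
      Set (EuclideanSpace ℝ (Fin n) × EuclideanSpace ℝ (Fin n))),
    ENNReal.ofReal (|u p.1 - u p.2| * dist p.1 p.2 ^ (-((n : ℝ) + s)))

/-!
The layer-cake identity `|a - b| = |Iio a ∆ Iio b|` writes `|u x - u y|` as the measure of the
levels `t` separating `u x` from `u y`, i.e. of those `t` with `(x, y) ∈ E ×ˢ Eᶜ ∪ Eᶜ ×ˢ E` for
`E = {u > t}`. After Tonelli, the symmetry of the kernel and of the domain of integration makes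
both rectangles contribute equally, which absorbs the factor `1/2`. Finally, outside `Ωᶜ ×ˢ Ωᶜ`
the rectangle `E ×ˢ Eᶜ` splits into the three interaction terms of `Pₛ(E, Ω)`.
-/

lemma Real.volume_Iio_symmDiff_Iio (a b : ℝ) :
    volume (Iio a ∆ Iio b) = ENNReal.ofReal |a - b| := by
  wlog hab : a ≤ b generalizing a b
  · rw [symmDiff_comm, abs_sub_comm]
    exact this b a (le_of_not_ge hab)
  have hIco : Iio b \ Iio a = Ico a b := by
    ext t
    simp
  rw [symmDiff_of_le (Iio_subset_Iio hab), hIco, Real.volume_Ico, abs_sub_comm,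
    abs_of_nonneg (sub_nonneg.2 hab)]

section Coarea

variable {X : Type*} {u : X → ℝ} {K : X × X → ℝ≥0∞}

def levelCut (u : X → ℝ) (t : ℝ) : Set (X × X) :=
  {x | t < u x} ×ˢ {x | t < u x}ᶜ ∪ {x | t < u x}ᶜ ×ˢ {x | t < u x}

lemma mem_levelCut_iff (t : ℝ) (p : X × X) :
    p ∈ levelCut u t ↔ t ∈ Iio (u p.1) ∆ Iio (u p.2) := by
  simp only [levelCut, mem_union, mem_prod, mem_compl_iff, mem_ofPred_eq, mem_symmDiff, mem_Iio]
  tauto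

lemma ofReal_abs_sub_mul_eq_lintegral_indicator_levelCut (p : X × X) :
    ENNReal.ofReal |u p.1 - u p.2| * K p = ∫⁻ t, (levelCut u t).indicator K p := by
  have hind (t : ℝ) :
      (levelCut u t).indicator K p = (Iio (u p.1) ∆ Iio (u p.2)).indicator 1 t * K p := by
    by_cases h : t ∈ Iio (u p.1) ∆ Iio (u p.2) <;> simp [indicator, mem_levelCut_iff, h]
  simp_rw [hind]
  have hI : MeasurableSet (Iio (u p.1) ∆ Iio (u p.2)) :=
    measurableSet_Iio.symmDiff measurableSet_Iio
  rw [lintegral_mul_const _ (measurable_one.indicator hI), lintegral_indicator_one hI,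
    Real.volume_Iio_symmDiff_Iio]

variable [MeasurableSpace X] {μ : Measure X} [SFinite μ]

lemma measurableSet_levelCut (hu : Measurable u) (t : ℝ) : MeasurableSet (levelCut u t) :=
  have hE : MeasurableSet {x | t < u x} := measurableSet_lt measurable_const hu
  (hE.prod hE.compl).union (hE.compl.prod hE)

lemma measurableSet_levelCut_uncurry (hu : Measurable u) :
    MeasurableSet {q : (X × X) × ℝ | q.1 ∈ levelCut u q.2} := by
  simp only [levelCut, mem_union, mem_prod, mem_compl_iff, mem_ofPred_eq]
  have h₁ : MeasurableSet {q : (X × X) × ℝ | q.2 < u q.1.1} :=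
    measurableSet_lt measurable_snd (hu.comp (measurable_fst.comp measurable_fst))
  have h₂ : MeasurableSet {q : (X × X) × ℝ | q.2 < u q.1.2} :=
    measurableSet_lt measurable_snd (hu.comp (measurable_snd.comp measurable_fst))
  exact (h₁.inter h₂.compl).union (h₁.compl.inter h₂)

lemma setLIntegral_ofReal_abs_sub_mul_eq_lintegral_levelCut (hK : Measurable K)
    (hu : Measurable u) (S : Set (X × X)) :
    ∫⁻ p in S, ENNReal.ofReal |u p.1 - u p.2| * K p ∂μ.prod μ
      = ∫⁻ t, ∫⁻ p in S ∩ levelCut u t, K p ∂μ.prod μ := by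
  simp_rw [ofReal_abs_sub_mul_eq_lintegral_indicator_levelCut]
  rw [lintegral_lintegral_swap]
  · refine lintegral_congr fun t => ?_
    rw [lintegral_indicator (measurableSet_levelCut hu t),
      Measure.restrict_restrict (measurableSet_levelCut hu t), inter_comm]
  · exact ((hK.comp measurable_fst).indicator (measurableSet_levelCut_uncurry hu)).aemeasurable

lemma setLIntegral_inter_prod_comm (hK : ∀ p, K p.swap = K p) {S : Set (X × X)}
    (hS : Prod.swap ⁻¹' S = S) (A B : Set X) :
    ∫⁻ p in S ∩ B ×ˢ A, K p ∂μ.prod μ = ∫⁻ p in S ∩ A ×ˢ B, K p ∂μ.prod μ := by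
  have hpre : Prod.swap ⁻¹' (S ∩ A ×ˢ B) = S ∩ B ×ˢ A := by
    rw [preimage_inter, hS, preimage_swap_prod]
  calc ∫⁻ p in S ∩ B ×ˢ A, K p ∂μ.prod μ
      = ∫⁻ p in Prod.swap ⁻¹' (S ∩ A ×ˢ B), K p.swap ∂μ.prod μ := by simp_rw [hpre, hK]
    _ = ∫⁻ p in S ∩ A ×ˢ B, K p ∂μ.prod μ :=
      Measure.measurePreserving_swap.setLIntegral_comp_preimage_emb
        MeasurableEquiv.prodComm.measurableEmbedding K _

theorem setLIntegral_ofReal_abs_sub_mul_eq_two_mul (hK : Measurable K)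
    (hK_swap : ∀ p, K p.swap = K p) (hu : Measurable u) {S : Set (X × X)} (hS : MeasurableSet S)
    (hS_swap : Prod.swap ⁻¹' S = S) :
    ∫⁻ p in S, ENNReal.ofReal |u p.1 - u p.2| * K p ∂μ.prod μ
      = 2 * ∫⁻ t, ∫⁻ p in S ∩ {x | t < u x} ×ˢ {x | t < u x}ᶜ, K p ∂μ.prod μ := by
  rw [setLIntegral_ofReal_abs_sub_mul_eq_lintegral_levelCut hK hu,
    ← lintegral_const_mul' _ _ (by simp)]
  refine lintegral_congr fun t => ?_
  set E := {x | t < u x}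
  have hE : MeasurableSet E := measurableSet_lt measurable_const hu
  have hdisj : Disjoint (S ∩ E ×ˢ Eᶜ) (S ∩ Eᶜ ×ˢ E) :=
    (disjoint_prod.2 (Or.inl disjoint_compl_right)).mono inter_subset_right inter_subset_right
  rw [levelCut, inter_union_distrib_left, lintegral_union (hS.inter (hE.compl.prod hE)) hdisj,
    setLIntegral_inter_prod_comm hK_swap hS_swap, two_mul]

end Coarea

section FractionalKernel

variable (n : ℕ) (s : ℝ)

noncomputable def fracKernel (p : EuclideanSpace ℝ (Fin n) × EuclideanSpace ℝ (Fin n)) : ℝ≥0∞ :=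
  ENNReal.ofReal (dist p.1 p.2 ^ (-((n : ℝ) + s)))

lemma measurable_fracKernel : Measurable (fracKernel n s) :=
  ENNReal.measurable_ofReal.comp ((measurable_fst.dist measurable_snd).pow measurable_const)

lemma fracKernel_swap (p : EuclideanSpace ℝ (Fin n) × EuclideanSpace ℝ (Fin n)) :
    fracKernel n s p.swap = fracKernel n s p := by
  simp [fracKernel, dist_comm]

lemma Ls_eq_setLIntegral_fracKernel (A B : Set (EuclideanSpace ℝ (Fin n))) :
    Ls n s A B = ∫⁻ p in A ×ˢ B, fracKernel n s p := by
  rw [Measure.volume_eq_prod, setLIntegral_prod _ (measurable_fracKernel n s).aemeasurable]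
  rfl

lemma Ps_eq_setLIntegral_fracKernel {E Ω : Set (EuclideanSpace ℝ (Fin n))}
    (hE : MeasurableSet E) (hΩ : MeasurableSet Ω) :
    Ps n s E Ω = ∫⁻ p in (univ \ Ωᶜ ×ˢ Ωᶜ) ∩ E ×ˢ Eᶜ, fracKernel n s p := by
  have hsplit : (univ \ Ωᶜ ×ˢ Ωᶜ) ∩ E ×ˢ Eᶜ
      = ((E ∩ Ω) ×ˢ (Eᶜ ∩ Ω) ∪ (E ∩ Ω) ×ˢ (Eᶜ \ Ω)) ∪ (E \ Ω) ×ˢ (Eᶜ ∩ Ω) := by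
    ext p
    simp only [mem_inter_iff, Set.mem_sdiff, mem_prod, mem_union, mem_univ, true_and,
      mem_compl_iff]
    tauto
  have hdisj₁ : Disjoint ((E ∩ Ω) ×ˢ (Eᶜ ∩ Ω)) ((E ∩ Ω) ×ˢ (Eᶜ \ Ω)) :=
    disjoint_prod.2 (Or.inr (disjoint_sdiff_right.mono_left inter_subset_right))
  have hinside_outside : Disjoint (E ∩ Ω) (E \ Ω) := disjoint_sdiff_right.mono_left inter_subset_right
  have hdisj₂ : Disjoint ((E ∩ Ω) ×ˢ (Eᶜ ∩ Ω) ∪ (E ∩ Ω) ×ˢ (Eᶜ \ Ω)) ((E \ Ω) ×ˢ (Eᶜ ∩ Ω)) :=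
    disjoint_union_left.2 ⟨disjoint_prod.2 (Or.inl hinside_outside), disjoint_prod.2 (Or.inl hinside_outside)⟩
  rw [hsplit, lintegral_union ((hE.diff hΩ).prod (hE.compl.inter hΩ)) hdisj₂,
    lintegral_union ((hE.inter hΩ).prod (hE.compl.diff hΩ)) hdisj₁,
    ← Ls_eq_setLIntegral_fracKernel, ← Ls_eq_setLIntegral_fracKernel,
    ← Ls_eq_setLIntegral_fracKernel, Ps]

lemma half_setLIntegral_eq_lintegral_superlevel {u : EuclideanSpace ℝ (Fin n) → ℝ}
    (hu : Measurable u) {S : Set (EuclideanSpace ℝ (Fin n) × EuclideanSpace ℝ (Fin n))}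
    (hS : MeasurableSet S) (hS_swap : Prod.swap ⁻¹' S = S) :
    2⁻¹ * ∫⁻ p in S, ENNReal.ofReal (|u p.1 - u p.2| * dist p.1 p.2 ^ (-((n : ℝ) + s)))
      = ∫⁻ t, ∫⁻ p in S ∩ {x | t < u x} ×ˢ {x | t < u x}ᶜ, fracKernel n s p := by
  have hmul (p : EuclideanSpace ℝ (Fin n) × EuclideanSpace ℝ (Fin n)) :
      ENNReal.ofReal (|u p.1 - u p.2| * dist p.1 p.2 ^ (-((n : ℝ) + s)))
        = ENNReal.ofReal |u p.1 - u p.2| * fracKernel n s p :=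
    ENNReal.ofReal_mul (abs_nonneg _)
  simp_rw [hmul]
  rw [Measure.volume_eq_prod, setLIntegral_ofReal_abs_sub_mul_eq_two_mul
    (measurable_fracKernel n s) (fracKernel_swap n s) hu hS hS_swap, ← mul_assoc,
    ENNReal.inv_mul_cancel two_ne_zero ENNReal.ofNat_ne_top, one_mul]

end FractionalKernel

theorem generalized_coarea_formula_general
    (n : ℕ) (s : ℝ)
    (Ω : Set (EuclideanSpace ℝ (Fin n))) (hΩ : IsOpen Ω)
    (u : EuclideanSpace ℝ (Fin n) → ℝ) (hu : Measurable u) :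
    Fc n s u Ω = ∫⁻ t : ℝ, Ps n s {x | t < u x} Ω
    ∧ 2⁻¹ * (∫⁻ x in Ω, ∫⁻ y in Ω,
          ENNReal.ofReal (|u x - u y| * dist x y ^ (-((n : ℝ) + s))))
        = ∫⁻ t : ℝ, Ls n s ({x | t < u x} ∩ Ω) ({x | t < u x}ᶜ ∩ Ω) := by
  have hΩm := hΩ.measurableSet
  constructor
  · have hS_swap : Prod.swap ⁻¹' (univ \ Ωᶜ ×ˢ Ωᶜ) = univ \ Ωᶜ ×ˢ Ωᶜ := by
      rw [preimage_sdiff, preimage_univ, preimage_swap_prod]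
    rw [Fc, half_setLIntegral_eq_lintegral_superlevel n s hu
      (MeasurableSet.univ.diff (hΩm.compl.prod hΩm.compl)) hS_swap]
    simp_rw [Ps_eq_setLIntegral_fracKernel n s (measurableSet_lt measurable_const hu) hΩm]
  · rw [← setLIntegral_prod (fun p : EuclideanSpace ℝ (Fin n) × EuclideanSpace ℝ (Fin n) =>
        ENNReal.ofReal (|u p.1 - u p.2| * dist p.1 p.2 ^ (-((n : ℝ) + s)))) (by fun_prop),
      ← Measure.volume_eq_prod,
      half_setLIntegral_eq_lintegral_superlevel n s hu (hΩm.prod hΩm) (preimage_swap_prod Ω Ω)]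
    simp_rw [prod_inter_prod, Ls_eq_setLIntegral_fracKernel, inter_comm]

/-- Proposition 3.1, generalized coarea formula:
`F(u,Ω) = ∫_ℝ Pₛ({u > t}, Ω) dt`, and in particular half of the `W^{s,1}(Ω)`-seminorm of `u`
equals the integral over `t` of the local parts `Pₛ^L({u > t}, Ω)`. -/
theorem generalized_coarea_formula
    (n : ℕ) (hn : 1 ≤ n) (s : ℝ) (hs : s ∈ Set.Ioo (0 : ℝ) 1)
    (Ω : Set (EuclideanSpace ℝ (Fin n))) (hΩ : IsOpen Ω)
    (u : EuclideanSpace ℝ (Fin n) → ℝ) (hu : Measurable u) :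
    Fc n s u Ω = ∫⁻ t : ℝ, Ps n s {x | t < u x} Ω
    ∧ 2⁻¹ * (∫⁻ x in Ω, ∫⁻ y in Ω,
          ENNReal.ofReal (|u x - u y| * dist x y ^ (-((n : ℝ) + s))))
        = ∫⁻ t : ℝ, Ls n s ({x | t < u x} ∩ Ω) ({x | t < u x}ᶜ ∩ Ω) :=
  generalized_coarea_formula_general n s Ω hΩ u hu
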